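/- Let 0 < τ < √2, α = 1 − τ²/2, β = √(τ² − τ⁴/4), I(η) = Pr_{X,Y ~ N(0,1), independent}[X ≥ η and αX + βY ≥ η], and Λ(η) = I(η)/Φ_c(η). Then for 0 < μ < 1/2, the derivative of μ ↦ Λ(Φ_c^{−1}(μ)) equals Π(Φ_c^{−1}(μ)), where Π(η) = ( 2·Φ_c(η)·Φ_c((1−α)η/β) − I(η) ) / Φ_c(η)². -/

import Mathlib

open MeasureTheory ProbabilityTheory Real

noncomputable section

/-- `Φ_c(η) = Pr_{X ~ N(0,1)}[X ≥ η]`. -/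
def gaussTail (η : ℝ) : ℝ := (gaussianReal 0 1 (Set.Ici η)).toReal

/-- The inverse of `Φ_c` on `(0,1)`: since `Φ_c` is continuous and strictly decreasing,
`Φ_c⁻¹(p) = sup {η : Φ_c(η) ≥ p}` for `p ∈ (0,1)`. -/
def gaussTailInv (p : ℝ) : ℝ := sSup {η : ℝ | p ≤ gaussTail η}

/-- `I(η) = Pr[X ≥ η ∧ αX + βY ≥ η]` for independent standard Gaussians `X, Y`. -/
def jointTail (α β η : ℝ) : ℝ :=
  (((gaussianReal 0 1).prod (gaussianReal 0 1))
      {z : ℝ × ℝ | η ≤ z.1 ∧ η ≤ α * z.1 + β * z.2}).toReal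

/-- `Π(η) = (2 Φ_c(η) Φ_c((1-α)η/β) - I(η)) / Φ_c(η)²`. -/
def PiFn (α β η : ℝ) : ℝ :=
  (2 * gaussTail η * gaussTail ((1 - α) * η / β) - jointTail α β η) / (gaussTail η) ^ 2

/-!
Conditioning on `X = x` gives `I(η) = ∫_{x ≥ η} Φ_c((η - αx)/β) ϕ(x) dx`, with `ϕ` the standard
normal density. Differentiating both occurrences of `η`, the moving lower limit contributes
`-ϕ(η) Φ_c((1 - α)η/β)`, and differentiation under the integral sign contributes the same amount:
since `α² + β² = 1`, `ϕ((η - αx)/β) ϕ(x) = ϕ(η) ϕ((x - αη)/β)`, i.e. the pair `(X, αX + βY)` is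
exchangeable. So `I'(η) = -2 ϕ(η) Φ_c((1 - α)η/β)`, and with `Φ_c' = -ϕ`, the inverse function
theorem and the quotient rule give `Π`.
-/

open Filter Topology Set Asymptotics

theorem hasDerivAt_diag_of_isLittleO {f : ℝ → ℝ → ℝ} {a d₁ d₂ : ℝ}
    (h₁ : HasDerivAt (fun x => f x a) d₁ a) (h₂ : HasDerivAt (f a) d₂ a)
    (hmixed : (fun x => f x x - f x a - f a x + f a a) =o[𝓝 a] fun x => x - a) :
    HasDerivAt (fun x => f x x) (d₁ + d₂) a := by
  rw [hasDerivAt_iff_isLittleO] at *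
  refine ((h₁.add h₂).add hmixed).congr_left fun x => ?_
  simp only [smul_eq_mul]
  ring

theorem hasDerivAt_setIntegral_Ici {g : ℝ → ℝ} {a : ℝ} (hg : Integrable g)
    (hga : ContinuousAt g a) : HasDerivAt (fun η => ∫ x in Ici η, g x) (-g a) a := by
  have hsplit : ∀ η, ∫ x in Ici η, g x = (∫ x in Ici a, g x) - ∫ x in a..η, g x := fun η => by
    rw [← intervalIntegral.integral_Ici_sub_Ici' hg.integrableOn hg.integrableOn, sub_sub_cancel]
  have hFTC : HasDerivAt (fun η => ∫ x in a..η, g x) (g a) a :=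
    intervalIntegral.integral_hasDerivAt_right hg.intervalIntegrable
      hg.aestronglyMeasurable.stronglyMeasurableAtFilter hga
  simpa [funext hsplit] using hFTC.const_sub (∫ x in Ici a, g x)

theorem isLittleO_setIntegral_Ici_mixed {F : ℝ → ℝ → ℝ} {a C : ℝ}
    (hint : ∀ b, Integrable (F b)) (hlip : ∀ b x, |F b x - F a x| ≤ C * |b - a|) :
    (fun η => (∫ x in Ici η, F η x) - (∫ x in Ici η, F a x) - (∫ x in Ici a, F η x)
      + ∫ x in Ici a, F a x) =o[𝓝 a] fun η => η - a := by
  have hmixed : ∀ η, (∫ x in Ici η, F η x) - (∫ x in Ici η, F a x) - (∫ x in Ici a, F η x)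
      + (∫ x in Ici a, F a x) = ∫ x in η..a, (F η x - F a x) := fun η => by
    have hdiff : Integrable (fun x => F η x - F a x) := (hint η).sub (hint a)
    rw [← intervalIntegral.integral_Ici_sub_Ici' hdiff.integrableOn hdiff.integrableOn,
      integral_sub (hint η).integrableOn (hint a).integrableOn,
      integral_sub (hint η).integrableOn (hint a).integrableOn]
    ring
  have hbound : (fun η => ∫ x in η..a, (F η x - F a x)) =O[𝓝 a] fun η => ‖η - a‖ ^ 2 := by
    refine IsBigO.of_bound C (Eventually.of_forall fun η => ?_)
    calc ‖∫ x in η..a, (F η x - F a x)‖ ≤ C * |η - a| * |a - η| :=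
          intervalIntegral.norm_integral_le_of_norm_le_const fun x _ => hlip η x
      _ = C * ‖‖η - a‖ ^ 2‖ := by rw [abs_sub_comm a η]; simp [sq, mul_assoc]
  simpa only [hmixed] using hbound.trans_isLittleO (isLittleO_pow_sub_sub a one_lt_two)

theorem hasDerivAt_setIntegral_Ici_diag {F : ℝ → ℝ → ℝ} {a C D : ℝ}
    (hint : ∀ b, Integrable (F b)) (hcont : ContinuousAt (F a) a)
    (hlip : ∀ b x, |F b x - F a x| ≤ C * |b - a|)
    (hD : HasDerivAt (fun b => ∫ x in Ici a, F b x) D a) :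
    HasDerivAt (fun η => ∫ x in Ici η, F η x) (-F a a + D) a :=
  hasDerivAt_diag_of_isLittleO (f := fun η b => ∫ x in Ici η, F b x)
    (hasDerivAt_setIntegral_Ici (hint a) hcont) hD (isLittleO_setIntegral_Ici_mixed hint hlip)

local notation "ϕ" => gaussianPDFReal 0 1

theorem continuous_gaussianPDFReal (m : ℝ) (v : NNReal) : Continuous (gaussianPDFReal m v) := by
  unfold gaussianPDFReal
  fun_prop

theorem gaussianPDFReal_zero_one (x : ℝ) : ϕ x = (√(2 * π))⁻¹ * exp (-x ^ 2 / 2) := by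
  simp [gaussianPDFReal]

theorem gaussianPDFReal_zero_one_le (x : ℝ) : ϕ x ≤ (√(2 * π))⁻¹ := by
  rw [gaussianPDFReal_zero_one]
  refine mul_le_of_le_one_right (by positivity) (exp_le_one_iff.mpr ?_)
  nlinarith [sq_nonneg x]

theorem gaussTail_eq_setIntegral (η : ℝ) : gaussTail η = ∫ x in Ici η, ϕ x := by
  rw [gaussTail, gaussianReal_apply_eq_integral 0 one_ne_zero, ENNReal.toReal_ofReal
    (setIntegral_nonneg measurableSet_Ici fun x _ => gaussianPDFReal_nonneg 0 1 x)]

theorem gaussTail_nonneg (η : ℝ) : 0 ≤ gaussTail η := ENNReal.toReal_nonneg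

theorem gaussTail_le_one (η : ℝ) : gaussTail η ≤ 1 :=
  ENNReal.toReal_le_of_le_ofReal zero_le_one (by simpa using prob_le_one)

theorem gaussTail_sub_gaussTail (u v : ℝ) : gaussTail u - gaussTail v = ∫ x in u..v, ϕ x := by
  have hϕ := integrable_gaussianPDFReal 0 1
  rw [gaussTail_eq_setIntegral, gaussTail_eq_setIntegral,
    intervalIntegral.integral_Ici_sub_Ici' hϕ.integrableOn hϕ.integrableOn]

theorem abs_gaussTail_sub_gaussTail_le (u v : ℝ) :
    |gaussTail u - gaussTail v| ≤ (√(2 * π))⁻¹ * |v - u| := by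
  rw [gaussTail_sub_gaussTail, ← Real.norm_eq_abs]
  refine intervalIntegral.norm_integral_le_of_norm_le_const fun x _ => ?_
  rw [Real.norm_of_nonneg (gaussianPDFReal_nonneg 0 1 x)]
  exact gaussianPDFReal_zero_one_le x

theorem hasDerivAt_gaussTail (η : ℝ) : HasDerivAt gaussTail (-ϕ η) η := by
  rw [funext gaussTail_eq_setIntegral]
  exact hasDerivAt_setIntegral_Ici (integrable_gaussianPDFReal 0 1)
    (continuous_gaussianPDFReal 0 1).continuousAt

theorem continuous_gaussTail : Continuous gaussTail :=
  continuous_iff_continuousAt.mpr fun η => (hasDerivAt_gaussTail η).continuousAt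

theorem gaussTail_strictAnti : StrictAnti gaussTail :=
  strictAnti_of_deriv_neg fun η => by
    rw [(hasDerivAt_gaussTail η).deriv, neg_lt_zero]
    exact gaussianPDFReal_pos 0 1 η one_ne_zero

theorem gaussTail_pos (η : ℝ) : 0 < gaussTail η :=
  (gaussTail_nonneg (η + 1)).trans_lt (gaussTail_strictAnti (lt_add_one η))

theorem tendsto_gaussTail_atTop : Tendsto gaussTail atTop (𝓝 0) := by
  have hempty : ⋂ η : ℝ, Ici η = ∅ :=
    eq_empty_of_forall_notMem fun x hx => (lt_add_one x).not_ge (mem_iInter.mp hx (x + 1))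
  have hmeas := tendsto_measure_iInter_atTop (μ := gaussianReal 0 1)
    (fun η => measurableSet_Ici.nullMeasurableSet) (fun _ _ h => Ici_subset_Ici.mpr h)
    ⟨0, measure_ne_top _ _⟩
  rw [hempty, measure_empty] at hmeas
  exact (ENNReal.tendsto_toReal ENNReal.zero_ne_top).comp hmeas

theorem tendsto_gaussTail_atBot : Tendsto gaussTail atBot (𝓝 1) := by
  have hmeas := tendsto_measure_Ici_atBot (gaussianReal 0 1)
  rw [measure_univ] at hmeas
  exact (ENNReal.tendsto_toReal ENNReal.one_ne_top).comp hmeas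

theorem exists_gaussTail_eq {p : ℝ} (h0 : 0 < p) (h1 : p < 1) : ∃ η, gaussTail η = p := by
  obtain ⟨b, hb⟩ := (tendsto_gaussTail_atTop.eventually_lt_const h0).exists
  obtain ⟨a, ha⟩ := (tendsto_gaussTail_atBot.eventually_const_lt h1).exists
  exact intermediate_value_univ b a continuous_gaussTail ⟨hb.le, ha.le⟩

theorem gaussTailInv_gaussTail (η : ℝ) : gaussTailInv (gaussTail η) = η := by
  have hset : {x | gaussTail η ≤ gaussTail x} = Iic η := by
    ext x
    exact gaussTail_strictAnti.le_iff_ge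
  rw [gaussTailInv, hset, csSup_Iic]

theorem hasDerivAt_gaussTailInv {p : ℝ} (h0 : 0 < p) (h1 : p < 1) :
    HasDerivAt gaussTailInv (-ϕ (gaussTailInv p))⁻¹ p := by
  obtain ⟨η, rfl⟩ := exists_gaussTail_eq h0 h1
  have hstrict : HasStrictDerivAt gaussTail (-ϕ η) η :=
    hasStrictDerivAt_of_hasDerivAt_of_continuousAt (Eventually.of_forall hasDerivAt_gaussTail)
      (continuous_gaussianPDFReal 0 1).neg.continuousAt
  rw [gaussTailInv_gaussTail]
  exact (hstrict.to_local_left_inverse (neg_ne_zero.mpr (gaussianPDFReal_pos 0 1 η one_ne_zero).ne')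
    (Eventually.of_forall gaussTailInv_gaussTail)).hasDerivAt

theorem gaussianReal_Ici {m σ : ℝ} (hσ : 0 < σ) (a : ℝ) :
    gaussianReal m (.mk (σ ^ 2) (sq_nonneg σ)) (Ici a) = gaussianReal 0 1 (Ici ((a - m) / σ)) := by
  have hmap : ((gaussianReal 0 1).map (σ * ·)).map (· + m)
      = gaussianReal m (.mk (σ ^ 2) (sq_nonneg σ)) := by
    rw [gaussianReal_map_const_mul, gaussianReal_map_add_const, mul_zero, zero_add, mul_one]
  have hpre : (σ * ·) ⁻¹' ((· + m) ⁻¹' Ici a) = Ici ((a - m) / σ) := by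
    ext y
    simp only [mem_preimage, mem_Ici, div_le_iff₀' hσ]
    constructor <;> intro h <;> linarith
  rw [← hmap, Measure.map_apply (measurable_add_const m) measurableSet_Ici,
    Measure.map_apply (measurable_const_mul σ)
      (measurableSet_Ici.preimage (measurable_add_const m)),
    hpre]

theorem setIntegral_Ici_gaussianPDFReal_div {σ : ℝ} (hσ : 0 < σ) (m a : ℝ) :
    ∫ x in Ici a, ϕ ((x - m) / σ) / σ = gaussTail ((a - m) / σ) := by
  have hpdf : ∀ x, ϕ ((x - m) / σ) / σ = gaussianPDFReal m (.mk (σ ^ 2) (sq_nonneg σ)) x := by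
    intro x
    rw [div_eq_inv_mul (x - m), gaussianPDFReal_inv_mul hσ.ne', gaussianPDFReal_sub,
      abs_of_pos hσ, mul_zero, zero_add, mul_one, mul_div_cancel_left₀ _ hσ.ne']
  have hv : NNReal.mk (σ ^ 2) (sq_nonneg σ) ≠ 0 := by
    rw [← NNReal.coe_ne_zero]
    exact (pow_pos hσ 2).ne'
  simp_rw [hpdf]
  rw [gaussTail, ← gaussianReal_Ici hσ, gaussianReal_apply_eq_integral m hv, ENNReal.toReal_ofReal
    (setIntegral_nonneg measurableSet_Ici fun x _ => gaussianPDFReal_nonneg _ _ x)]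

theorem gaussianPDFReal_div_mul_gaussianPDFReal {α β : ℝ} (hβ : β ≠ 0) (hαβ : α ^ 2 + β ^ 2 = 1)
    (b x : ℝ) : ϕ ((b - α * x) / β) * ϕ x = ϕ b * ϕ ((x - α * b) / β) := by
  have hexp :
      -((b - α * x) / β) ^ 2 / 2 + -x ^ 2 / 2 = -b ^ 2 / 2 + -((x - α * b) / β) ^ 2 / 2 := by
    field_simp
    linear_combination (b ^ 2 - x ^ 2) * hαβ
  simp only [gaussianPDFReal_zero_one]
  rw [mul_mul_mul_comm, ← exp_add, hexp, exp_add]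
  ring

section JointTail

variable {α β : ℝ}

theorem jointTail_eq_setIntegral (hβ : 0 < β) (η : ℝ) :
    jointTail α β η = ∫ x in Ici η, gaussTail ((η - α * x) / β) * ϕ x := by
  set S : Set (ℝ × ℝ) := {z | η ≤ z.1 ∧ η ≤ α * z.1 + β * z.2}
  have hS : MeasurableSet S := (measurableSet_le measurable_const measurable_fst).inter
    (measurableSet_le measurable_const
      ((measurable_fst.const_mul α).add (measurable_snd.const_mul β)))
  have hsection : ∀ x, ϕ x • (gaussianReal 0 1 (Prod.mk x ⁻¹' S)).toReal
      = (Ici η).indicator (fun x => gaussTail ((η - α * x) / β) * ϕ x) x := by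
    intro x
    by_cases hx : η ≤ x
    · have hslice : Prod.mk x ⁻¹' S = Ici ((η - α * x) / β) := by
        ext y
        simp only [S, mem_preimage, mem_ofPred_eq, mem_Ici, div_le_iff₀ hβ, hx, true_and]
        constructor <;> intro h <;> linarith
      rw [indicator_of_mem (mem_Ici.mpr hx), hslice, smul_eq_mul, mul_comm]
      rfl
    · have hslice : Prod.mk x ⁻¹' S = ∅ :=
        eq_empty_of_forall_notMem fun y hy => hx hy.1
      rw [indicator_of_notMem (by simpa using hx), hslice, measure_empty, ENNReal.toReal_zero,
        smul_zero]
  rw [jointTail, Measure.prod_apply hS, ← integral_toReal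
    (measurable_measure_prodMk_left hS).aemeasurable (ae_of_all _ fun x => measure_lt_top _ _),
    integral_gaussianReal_eq_integral_smul one_ne_zero, funext hsection,
    integral_indicator measurableSet_Ici]

theorem integrable_gaussTail_comp_mul_gaussianPDFReal (b : ℝ) :
    Integrable fun x => gaussTail ((b - α * x) / β) * ϕ x :=
  (integrable_gaussianPDFReal 0 1).bdd_mul
    (continuous_gaussTail.comp (by fun_prop)).aestronglyMeasurable
    (ae_of_all _ fun x => by
      rw [Real.norm_of_nonneg (gaussTail_nonneg _)]
      exact gaussTail_le_one _)

theorem abs_gaussTail_comp_mul_sub_le (hβ : 0 < β) (b b' x : ℝ) :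
    |gaussTail ((b - α * x) / β) * ϕ x - gaussTail ((b' - α * x) / β) * ϕ x|
      ≤ (√(2 * π))⁻¹ / β * ϕ x * |b - b'| := by
  have hϕ := gaussianPDFReal_nonneg 0 1 x
  have harg : |(b' - α * x) / β - (b - α * x) / β| = |b - b'| / β := by
    rw [div_sub_div_same, abs_div, abs_of_pos hβ, sub_sub_sub_cancel_right, abs_sub_comm]
  calc |gaussTail ((b - α * x) / β) * ϕ x - gaussTail ((b' - α * x) / β) * ϕ x|
      = |gaussTail ((b - α * x) / β) - gaussTail ((b' - α * x) / β)| * ϕ x := by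
        rw [← sub_mul, abs_mul, abs_of_nonneg hϕ]
    _ ≤ (√(2 * π))⁻¹ * (|b - b'| / β) * ϕ x := by
        rw [← harg]
        gcongr
        exact abs_gaussTail_sub_gaussTail_le _ _
    _ = (√(2 * π))⁻¹ / β * ϕ x * |b - b'| := by ring

theorem hasDerivAt_setIntegral_gaussTail_comp (hβ : 0 < β) (hαβ : α ^ 2 + β ^ 2 = 1)
    (a b₀ : ℝ) :
    HasDerivAt (fun b => ∫ x in Ici a, gaussTail ((b - α * x) / β) * ϕ x)
      (-(ϕ b₀ * gaussTail ((a - α * b₀) / β))) b₀ := by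
  have hϕ := continuous_gaussianPDFReal 0 1
  have hlip : ∀ x, LipschitzWith (nnabs ((√(2 * π))⁻¹ / β * ϕ x))
      fun b => gaussTail ((b - α * x) / β) * ϕ x := fun x =>
    LipschitzWith.of_dist_le_mul fun b b' => by
      rw [coe_nnabs, abs_of_nonneg
        (mul_nonneg (div_nonneg (by positivity) hβ.le) (gaussianPDFReal_nonneg 0 1 x))]
      exact abs_gaussTail_comp_mul_sub_le hβ b b' x
  have hderiv : ∀ x, HasDerivAt (fun b => gaussTail ((b - α * x) / β) * ϕ x)
      (-ϕ ((b₀ - α * x) / β) / β * ϕ x) b₀ := fun x => by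
    have hinner : HasDerivAt (fun b => (b - α * x) / β) (1 / β) b₀ :=
      ((hasDerivAt_id b₀).sub_const (α * x)).div_const β
    simpa [div_eq_mul_inv] using ((hasDerivAt_gaussTail _).comp b₀ hinner).mul_const (ϕ x)
  have hdom := hasDerivAt_integral_of_dominated_loc_of_lip (μ := volume.restrict (Ici a))
    (F := fun b x => gaussTail ((b - α * x) / β) * ϕ x)
    (bound := fun x => (√(2 * π))⁻¹ / β * ϕ x) univ_mem
    (Eventually.of_forall fun b =>
      (integrable_gaussTail_comp_mul_gaussianPDFReal b).aestronglyMeasurable.restrict)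
    (integrable_gaussTail_comp_mul_gaussianPDFReal b₀).restrict
    ((hϕ.comp (by fun_prop)).neg.div_const β |>.mul hϕ).aestronglyMeasurable
    (ae_of_all _ fun x => (hlip x).lipschitzOnWith)
    ((integrable_gaussianPDFReal 0 1).const_mul _).restrict
    (ae_of_all _ hderiv)
  have heval : ∫ x in Ici a, -ϕ ((b₀ - α * x) / β) / β * ϕ x
      = -(ϕ b₀ * gaussTail ((a - α * b₀) / β)) := by
    rw [← setIntegral_Ici_gaussianPDFReal_div hβ, ← integral_const_mul, ← integral_neg]
    congr 1
    ext x
    rw [neg_div, neg_mul, div_mul_eq_mul_div, gaussianPDFReal_div_mul_gaussianPDFReal hβ.ne' hαβ,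
      mul_div_assoc]
  exact heval ▸ hdom.2

theorem hasDerivAt_jointTail (hβ : 0 < β) (hαβ : α ^ 2 + β ^ 2 = 1) (η : ℝ) :
    HasDerivAt (jointTail α β) (-2 * ϕ η * gaussTail ((1 - α) * η / β)) η := by
  have hlip : ∀ b x, |gaussTail ((b - α * x) / β) * ϕ x - gaussTail ((η - α * x) / β) * ϕ x|
      ≤ (√(2 * π))⁻¹ / β * (√(2 * π))⁻¹ * |b - η| := fun b x =>
    (abs_gaussTail_comp_mul_sub_le hβ b η x).trans (by gcongr; exact gaussianPDFReal_zero_one_le x)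
  have hdiag := hasDerivAt_setIntegral_Ici_diag integrable_gaussTail_comp_mul_gaussianPDFReal
    ((continuous_gaussTail.comp (by fun_prop)).mul (continuous_gaussianPDFReal 0 1)).continuousAt
    hlip (hasDerivAt_setIntegral_gaussTail_comp hβ hαβ η η)
  rw [funext (jointTail_eq_setIntegral hβ)]
  convert hdiag using 1
  rw [show (1 - α) * η / β = (η - α * η) / β by ring]
  ring

end JointTail

/-- For `0 < τ < √2`, `α = 1 - τ²/2`, `β = √(τ² - τ⁴/4)`, `Λ(η) = I(η)/Φ_c(η)`, and
`0 < μ < 1/2`, the derivative of `μ ↦ Λ(Φ_c⁻¹(μ))` at `μ` equals `Π(Φ_c⁻¹(μ))`. -/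
theorem lambda_comp_inv_hasDerivAt (τ α β : ℝ) (hτ0 : 0 < τ) (hτ : τ < Real.sqrt 2)
    (hα : α = 1 - τ ^ 2 / 2) (hβ : β = Real.sqrt (τ ^ 2 - τ ^ 4 / 4))
    (μ : ℝ) (hμ0 : 0 < μ) (hμ : μ < 1 / 2) :
    HasDerivAt (fun m => jointTail α β (gaussTailInv m) / gaussTail (gaussTailInv m))
      (PiFn α β (gaussTailInv μ)) μ := by
  have hτ2 : τ ^ 2 < 2 := by
    nlinarith [sq_sqrt (zero_le_two : (0 : ℝ) ≤ 2), sqrt_nonneg 2]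
  have hvar : 0 < τ ^ 2 - τ ^ 4 / 4 := by nlinarith [pow_pos hτ0 2]
  have hβ0 : 0 < β := hβ ▸ sqrt_pos.mpr hvar
  have hαβ : α ^ 2 + β ^ 2 = 1 := by
    rw [hα, hβ, sq_sqrt hvar.le]
    ring
  have hϕ : ϕ (gaussTailInv μ) ≠ 0 := (gaussianPDFReal_pos 0 1 _ one_ne_zero).ne'
  have hΛ := (hasDerivAt_jointTail hβ0 hαβ (gaussTailInv μ)).div
    (hasDerivAt_gaussTail (gaussTailInv μ)) (gaussTail_pos (gaussTailInv μ)).ne'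
  refine (hΛ.comp μ (hasDerivAt_gaussTailInv hμ0 (by linarith))).congr_deriv ?_
  unfold PiFn
  field_simp
  ring
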